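/- Let M̂ be the (q+1)×(q+1) lower triangular matrix with diagonal entries 1/2 and strictly-lower entries 1. Then the symmetric matrix M̂ᵀM̂ is positive semidefinite, and consequently all eigenvalues of the matrix A = −μβ² M̂ᵀM̂ − uβ M̂ (with μ, u, β > 0) have nonpositive real part. -/

import Mathlib

/-!
For a real matrix `A` and a complex eigenpair `A v = λ v`, writing `v = x + i y` gives
`Re λ ‖v‖² = Re (v* A v) = xᵀ A x + yᵀ A y`, so it suffices that the real quadratic form of `A`
is nonpositive. For `A = -μβ² M̂ᵀM̂ - uβ M̂` this form is `-μβ² ‖M̂ x‖² - uβ (∑ xᵢ)² / 2`,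
because `M̂ + M̂ᵀ` is the all-ones matrix.
-/

open Matrix

open scoped ComplexOrder

namespace Matrix

variable {n : Type*} [Fintype n]

theorem re_star_dotProduct_map_ofReal_mulVec (A : Matrix n n ℝ) (v : n → ℂ) :
    (star v ⬝ᵥ A.map Complex.ofReal *ᵥ v).re =
      (fun i => (v i).re) ⬝ᵥ A *ᵥ (fun i => (v i).re) +
        (fun i => (v i).im) ⬝ᵥ A *ᵥ (fun i => (v i).im) := by
  simp only [dotProduct, mulVec, map_apply, Pi.star_apply, Finset.mul_sum, Complex.re_sum,
    ← Finset.sum_add_distrib]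
  refine Finset.sum_congr rfl fun i _ => Finset.sum_congr rfl fun j _ => ?_
  simp only [Complex.star_def, Complex.mul_re, Complex.conj_re, Complex.conj_im,
    Complex.mul_im, Complex.ofReal_re, Complex.ofReal_im]
  ring

theorem re_le_zero_of_isRoot_charpoly [DecidableEq n] {A : Matrix n n ℝ}
    (hA : ∀ x, x ⬝ᵥ A *ᵥ x ≤ 0) {lam : ℂ} (hlam : (A.map Complex.ofReal).charpoly.IsRoot lam) :
    lam.re ≤ 0 := by
  rw [← charpoly_toLin', ← Module.End.hasEigenvalue_iff_isRoot_charpoly] at hlam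
  obtain ⟨v, hv⟩ := hlam.exists_hasEigenvector
  have hAv : A.map Complex.ofReal *ᵥ v = lam • v := by
    simpa only [toLin'_apply] using hv.apply_eq_smul
  obtain ⟨hnorm, hnorm_im⟩ := Complex.pos_iff.1 (dotProduct_star_self_pos_iff.2 hv.2)
  have hquad : lam.re * (star v ⬝ᵥ v).re ≤ 0 := by
    have hre := re_star_dotProduct_map_ofReal_mulVec A v
    rw [hAv, dotProduct_smul, smul_eq_mul, Complex.mul_re, ← hnorm_im, mul_zero, sub_zero] at hre
    linarith [hA fun i => (v i).re, hA fun i => (v i).im]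
  exact nonpos_of_mul_nonpos_left hquad hnorm

theorem two_mul_dotProduct_mulVec_self_of_add_transpose_eq_one {R : Type*} [CommRing R]
    {M : Matrix n n R} (hM : M + Mᵀ = of fun _ _ => 1) (x : n → R) :
    2 * (x ⬝ᵥ M *ᵥ x) = (∑ i, x i) ^ 2 := by
  have hT : x ⬝ᵥ Mᵀ *ᵥ x = x ⬝ᵥ M *ᵥ x := by
    rw [dotProduct_mulVec, vecMul_transpose, dotProduct_comm]
  calc 2 * (x ⬝ᵥ M *ᵥ x) = x ⬝ᵥ (M + Mᵀ) *ᵥ x := by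
        rw [add_mulVec, dotProduct_add, hT, two_mul]
    _ = (∑ i, x i) ^ 2 := by
        rw [sq, Finset.sum_mul_sum]
        simp only [hM, dotProduct, mulVec, of_apply, one_mul, Finset.mul_sum]

end Matrix

noncomputable def halfDiagLowerOnes (ι : Type*) [LinearOrder ι] : Matrix ι ι ℝ :=
  of fun i j => if i = j then 1 / 2 else if j < i then 1 else 0

theorem halfDiagLowerOnes_add_transpose (ι : Type*) [LinearOrder ι] :
    halfDiagLowerOnes ι + (halfDiagLowerOnes ι)ᵀ = of fun _ _ => 1 := by
  ext i j
  rcases lt_trichotomy i j with h | rfl | h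
  · simp [halfDiagLowerOnes, h.ne, h.ne', h.not_gt, h]
  · norm_num [halfDiagLowerOnes]
  · simp [halfDiagLowerOnes, h.ne, h.ne', h.not_gt, h]

/-- `M̂ᵀM̂` is positive semidefinite, hence every (complex) eigenvalue of
`A = -μβ² M̂ᵀM̂ - uβ M̂` (with `μ, u, β > 0`) has nonpositive real part. -/
theorem modal_laguerre_matrix_stable (q : ℕ) (μ u β : ℝ)
    (hμ : 0 < μ) (hu : 0 < u) (hβ : 0 < β)
    (Mhat : Matrix (Fin (q + 1)) (Fin (q + 1)) ℝ)
    (hM : Mhat = Matrix.of fun (i j : Fin (q + 1)) =>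
      if i = j then (1 : ℝ) / 2 else if (j : ℕ) < (i : ℕ) then 1 else 0)
    (A : Matrix (Fin (q + 1)) (Fin (q + 1)) ℝ)
    (hA : A = -(μ * β ^ 2) • (Mhatᵀ * Mhat) - (u * β) • Mhat) :
    (Mhatᵀ * Mhat).PosSemidef ∧
    ∀ lam : ℂ, (A.map (Complex.ofReal ·)).charpoly.IsRoot lam → lam.re ≤ 0 := by
  have hPSD : (Mhatᵀ * Mhat).PosSemidef := by
    simpa only [conjTranspose_eq_transpose_of_trivial] using posSemidef_conjTranspose_mul_self Mhat
  refine ⟨hPSD, fun lam => re_le_zero_of_isRoot_charpoly fun x => ?_⟩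
  -- on `Fin`, `j < i` unfolds to `(j : ℕ) < i`, so `hM` identifies `Mhat` with `halfDiagLowerOnes`
  have hsym : Mhat + Mhatᵀ = of fun _ _ => 1 := hM ▸ halfDiagLowerOnes_add_transpose (Fin (q + 1))
  have hgram : 0 ≤ x ⬝ᵥ (Mhatᵀ * Mhat) *ᵥ x := by
    simpa only [star_trivial] using hPSD.dotProduct_mulVec_nonneg x
  have hsum := two_mul_dotProduct_mulVec_self_of_add_transpose_eq_one hsym x
  have hc : 0 ≤ μ * β ^ 2 := by positivity
  have hd : 0 ≤ u * β := by positivity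
  rw [hA, sub_mulVec, smul_mulVec, smul_mulVec, dotProduct_sub, dotProduct_smul, dotProduct_smul,
    smul_eq_mul, smul_eq_mul]
  nlinarith [sq_nonneg (∑ i, x i)]
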